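/- Fix 0 ≤ λ < 3/4 and let M(λ) = (1-λ) I₄ + (λ/3) Σ_{α∈{x,y,z}} σ^α ⊗ (σ^α)^* ∈ M₄(ℂ), the vectorized single-qubit depolarizing channel. Then (i) for every 2×2 complex matrix ρ, M(λ)·vec(ρ) = vec((1-λ)ρ + (λ/3) Σ_α σ^α ρ σ^α), where vec(ρ) = Σ_{a,b} ρ_{ab} |a⟩⊗|b⟩; and (ii) M(λ) = exp( -(3/4)·log(1/(1-4λ/3)) · ( I₄ - (1/3) Σ_{α} σ^α ⊗ (σ^α)^* ) ), i.e., the noisy channel is exactly the imaginary-time evolution generated by the Hermitian perturbation H_depol with local Zeeman coefficient (3/4)log(1/(1-4λ/3)). -/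

import Mathlib

/-! With `Ω = vecM 1 = |00⟩ + |11⟩`, the Pauli identity `Σ_α σ^α ⊗ (σ^α)^* = 2 |Ω⟩⟨Ω| - 1` makes
both `M(λ)` and the generator affine in the idempotent `P = 1 - |Ω⟩⟨Ω|/2`:
`M(λ) = 1 - (4λ/3) P` and the exponent equals `log (1 - 4λ/3) • P`. Since `exp (a P) = 1 + (eᵃ - 1) P`
for an idempotent `P`, the two agree. Part (i) is the operator-state identity
`(A ⊗ B^*) vec ρ = vec (A ρ B†)` together with `σ^α† = σ^α`. -/

open Matrix
open scoped Kronecker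

noncomputable section

/-- The Pauli matrices σ^x, σ^y, σ^z. -/
def pauli : Fin 3 → Matrix (Fin 2) (Fin 2) ℂ
  | 0 => !![0, 1; 1, 0]
  | 1 => !![0, -Complex.I; Complex.I, 0]
  | 2 => !![1, 0; 0, -1]

/-- The vectorized single-qubit depolarizing channel
`M(λ) = (1-λ) I₄ + (λ/3) Σ_α σ^α ⊗ (σ^α)^*`. -/
def depolM (lam : ℝ) : Matrix (Fin 2 × Fin 2) (Fin 2 × Fin 2) ℂ :=
  ((1 - lam : ℝ) : ℂ) • (1 : Matrix (Fin 2 × Fin 2) (Fin 2 × Fin 2) ℂ) +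
    ((lam / 3 : ℝ) : ℂ) • ∑ α : Fin 3, pauli α ⊗ₖ (pauli α).map (starRingEnd ℂ)

/-- Vectorization `vec(ρ) = Σ_{a,b} ρ_{ab} |a⟩⊗|b⟩`. -/
def vecM (ρ : Matrix (Fin 2) (Fin 2) ℂ) : Fin 2 × Fin 2 → ℂ := fun p => ρ p.1 p.2

theorem smul_pow_of_isIdempotentElem {𝕂 A : Type*} [CommSemiring 𝕂] [Ring A] [Algebra 𝕂 A]
    (a : 𝕂) {Q : A} (hQ : IsIdempotentElem Q) (n : ℕ) :
    (a • Q) ^ n = a ^ n • Q + if n = 0 then 1 - Q else 0 := by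
  rcases n with _ | n
  · simp
  · simp [smul_pow, hQ.pow_succ_eq]

open NormedSpace in
theorem exp_smul_of_isIdempotentElem {𝕂 A : Type*} [RCLike 𝕂] [Ring A] [Algebra 𝕂 A]
    [TopologicalSpace A] [IsTopologicalRing A] [ContinuousSMul 𝕂 A] [T2Space A]
    (a : 𝕂) {Q : A} (hQ : IsIdempotentElem Q) :
    exp (a • Q) = 1 + (exp a - 1) • Q := by
  have hseries : HasSum (fun n => ((n.factorial : 𝕂)⁻¹ * a ^ n) • Q + if n = 0 then 1 - Q else 0)
      (exp a • Q + (1 - Q)) :=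
    ((exp_series_hasSum_exp' (𝕂 := 𝕂) a).smul_const Q).add (hasSum_ite_eq 0 (1 - Q))
  have hterms : (fun n => (n.factorial⁻¹ : 𝕂) • (a • Q) ^ n) =
      fun n => ((n.factorial : 𝕂)⁻¹ * a ^ n) • Q + if n = 0 then 1 - Q else 0 := by
    ext n
    rw [smul_pow_of_isIdempotentElem a hQ, smul_add, smul_smul]
    split_ifs <;> simp_all
  rw [exp_eq_tsum 𝕂]
  beta_reduce
  rw [hterms, hseries.tsum_eq, sub_smul, one_smul]
  abel

theorem vecM_eq_vec_transpose (ρ : Matrix (Fin 2) (Fin 2) ℂ) : vecM ρ = vec ρᵀ := rfl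

theorem kronecker_map_conj_mulVec_vecM (A B ρ : Matrix (Fin 2) (Fin 2) ℂ) :
    (A ⊗ₖ B.map (starRingEnd ℂ)) *ᵥ vecM ρ = vecM (A * ρ * Bᴴ) := by
  rw [vecM_eq_vec_transpose, kronecker_mulVec_vec, vecM_eq_vec_transpose, transpose_mul,
    transpose_mul, conjTranspose, transpose_map, transpose_transpose, Matrix.mul_assoc]
  rfl

theorem pauli_isHermitian (α : Fin 3) : (pauli α).IsHermitian := by
  fin_cases α <;> ext i j <;> fin_cases i <;> fin_cases j <;> simp [pauli]

def pauliKronSum : Matrix (Fin 2 × Fin 2) (Fin 2 × Fin 2) ℂ :=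
  ∑ α : Fin 3, pauli α ⊗ₖ (pauli α).map (starRingEnd ℂ)

theorem pauliKronSum_eq : pauliKronSum = (2 : ℂ) • vecMulVec (vecM 1) (vecM 1) - 1 := by
  ext ⟨i, j⟩ ⟨k, l⟩
  fin_cases i <;> fin_cases j <;> fin_cases k <;> fin_cases l <;>
    simp [pauliKronSum, pauli, vecM, vecMulVec, Fin.sum_univ_three, Matrix.sum_apply,
      Matrix.one_apply] <;> norm_num

-- The projector onto the Bell state `(|00⟩ + |11⟩)/√2`.
def bellProj : Matrix (Fin 2 × Fin 2) (Fin 2 × Fin 2) ℂ :=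
  (1 / 2 : ℂ) • vecMulVec (vecM 1) (vecM 1)

theorem isIdempotentElem_bellProj : IsIdempotentElem bellProj := by
  have hnorm : vecM 1 ⬝ᵥ vecM 1 = (2 : ℂ) := by
    simp [dotProduct, vecM, Fintype.sum_prod_type, Matrix.one_apply]
  rw [IsIdempotentElem, bellProj, smul_mul_smul, vecMulVec_mul_vecMulVec, hnorm, vecMulVec_smul,
    smul_smul]
  norm_num

theorem depolM_eq (lam : ℝ) : depolM lam = 1 - ((4 * lam / 3 : ℝ) : ℂ) • (1 - bellProj) := by
  rw [depolM, ← pauliKronSum, pauliKronSum_eq, bellProj]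
  push_cast
  module

theorem one_sub_third_smul_pauliKronSum :
    1 - (1 / 3 : ℂ) • pauliKronSum = (4 / 3 : ℂ) • (1 - bellProj) := by
  rw [pauliKronSum_eq, bellProj]
  module

theorem exp_neg_depolarizing_rate {lam : ℝ} (h : lam < 3 / 4) :
    NormedSpace.exp (-((3 / 4 * Real.log (1 / (1 - 4 * lam / 3)) : ℝ) : ℂ) * (4 / 3)) =
      ((1 - 4 * lam / 3 : ℝ) : ℂ) := by
  have hrate : -((3 / 4 * Real.log (1 / (1 - 4 * lam / 3)) : ℝ) : ℂ) * (4 / 3) =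
      (Real.log (1 - 4 * lam / 3) : ℂ) := by
    rw [one_div, Real.log_inv]
    push_cast
    ring
  rw [hrate, ← Complex.exp_eq_exp_ℂ, ← Complex.ofReal_exp, Real.exp_log (by linarith)]

theorem stmt12_general (lam : ℝ) (h1 : lam < 3 / 4) :
    (∀ ρ : Matrix (Fin 2) (Fin 2) ℂ,
      (depolM lam).mulVec (vecM ρ) =
        vecM (((1 - lam : ℝ) : ℂ) • ρ +
          ((lam / 3 : ℝ) : ℂ) • ∑ α : Fin 3, pauli α * ρ * pauli α)) ∧
    depolM lam =
      NormedSpace.exp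
        ((-(((3 / 4 * Real.log (1 / (1 - 4 * lam / 3)) : ℝ)) : ℂ)) •
          ((1 : Matrix (Fin 2 × Fin 2) (Fin 2 × Fin 2) ℂ) -
            (1 / 3 : ℂ) • ∑ α : Fin 3, pauli α ⊗ₖ (pauli α).map (starRingEnd ℂ))) := by
  refine ⟨fun ρ => ?_, ?_⟩
  · simp only [depolM, add_mulVec, smul_mulVec, one_mulVec, sum_mulVec,
      kronecker_map_conj_mulVec_vecM, (pauli_isHermitian _).eq]
    rfl
  · rw [← pauliKronSum, one_sub_third_smul_pauliKronSum, smul_smul,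
      exp_smul_of_isIdempotentElem _ isIdempotentElem_bellProj.one_sub,
      exp_neg_depolarizing_rate h1, depolM_eq]
    push_cast
    module

/-- for `0 ≤ λ < 3/4`, (i) `M(λ)·vec(ρ) = vec((1-λ)ρ + (λ/3)Σ_α σ^α ρ σ^α)`
for every 2×2 complex matrix ρ, and (ii) `M(λ)` is the imaginary-time evolution
`exp(-(3/4)·log(1/(1-4λ/3)) · (I₄ - (1/3)Σ_α σ^α⊗(σ^α)^*))` generated by the Hermitian
perturbation with local Zeeman coefficient `(3/4)·log(1/(1-4λ/3))`. -/
theorem stmt12 (lam : ℝ) (h0 : 0 ≤ lam) (h1 : lam < 3 / 4) :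
    (∀ ρ : Matrix (Fin 2) (Fin 2) ℂ,
      (depolM lam).mulVec (vecM ρ) =
        vecM (((1 - lam : ℝ) : ℂ) • ρ +
          ((lam / 3 : ℝ) : ℂ) • ∑ α : Fin 3, pauli α * ρ * pauli α)) ∧
    depolM lam =
      NormedSpace.exp
        ((-(((3 / 4 * Real.log (1 / (1 - 4 * lam / 3)) : ℝ)) : ℂ)) •
          ((1 : Matrix (Fin 2 × Fin 2) (Fin 2 × Fin 2) ℂ) -
            (1 / 3 : ℂ) • ∑ α : Fin 3, pauli α ⊗ₖ (pauli α).map (starRingEnd ℂ))) :=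
  stmt12_general lam h1

end
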